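/- arXiv:0808.1400 — 5 statements merged into one kernel-verified Lean document; each statement's English description precedes it below -/
import Mathlib

section
/- Let a ≥ 1, s ≠ t with s, t ∈ {0,…,a−1}, and let C_a = {i ∈ {0,…,2^a−1} : wt(i) ∈ {⌈a/2⌉−1, ⌈a/2⌉}}. Then every i ∈ C_a ∩ (2^s ⊕ 2^t ⊕ C_a) satisfies i_s + i_t = 1 (i.e., exactly one of bits s and t of i equals 1). -/
/-- Hamming weight of a natural number. -/
def wt (n : ℕ) : ℕ := (Nat.digits 2 n).sum

def Cset (a : ℕ) : Set ℕ :=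
  {i | i < 2 ^ a ∧ (wt i = (a + 1) / 2 - 1 ∨ wt i = (a + 1) / 2)}

lemma wt_div2 (n : ℕ) (hn : 0 < n) : wt n = n % 2 + wt (n / 2) := by
  unfold wt
  rw [Nat.digits_def' (by norm_num) hn]
  simp

lemma wt_eq_sum (k : ℕ) : ∀ n < 2 ^ k,
    wt n = ∑ j ∈ Finset.range k, (n.testBit j).toNat := by
  induction k with
  | zero =>
    intro n hn
    interval_cases n
    simp [wt]
  | succ k ih =>
    intro n hn
    rcases Nat.eq_zero_or_pos n with rfl | hpos
    · simp [wt]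
    rw [wt_div2 n hpos, Finset.sum_range_succ']
    have h1 : ∀ j, n.testBit (j + 1) = (n / 2).testBit j := by
      intro j; rw [Nat.testBit_succ]
    have h2 : (n.testBit 0).toNat = n % 2 := by
      rcases Nat.mod_two_eq_zero_or_one n with h | h <;>
        simp [Nat.testBit_zero, Nat.mod_two_eq_one_iff_testBit_zero.symm, h]
    have h3 : n / 2 < 2 ^ k := by
      rw [Nat.div_lt_iff_lt_mul (by norm_num)]
      calc n < 2 ^ (k + 1) := hn
        _ = 2 ^ k * 2 := by ring
    simp only [h1, h2]
    rw [ih _ h3]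
    ring

theorem stmt2 (a : ℕ) (ha : 1 ≤ a) (s t : ℕ) (hs : s < a) (ht : t < a) (hst : s ≠ t)
    (i : ℕ) (hi : i ∈ Cset a ∩ ((fun c => 2 ^ s ^^^ (2 ^ t ^^^ c)) '' Cset a)) :
    (if i.testBit s then 1 else 0) + (if i.testBit t then 1 else 0) = 1 := by
  obtain ⟨⟨hilt, hiw⟩, c, ⟨hclt, hcw⟩, hic⟩ := hi
  simp only at hic
  have hib : ∀ j, i.testBit j =
      (((2 ^ s : ℕ).testBit j).xor (((2 ^ t : ℕ).testBit j).xor (c.testBit j))) := by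
    intro j
    rw [← hic]
    simp [Nat.testBit_xor]
  -- bits of c and i agree away from s, t
  have hagree : ∀ j, j ≠ s → j ≠ t → c.testBit j = i.testBit j := by
    intro j h1 h2
    rw [hib j, Nat.testBit_two_pow, Nat.testBit_two_pow]
    simp [Ne.symm h1, Ne.symm h2]
  have hcs : c.testBit s = !(i.testBit s) := by
    rw [hib s, Nat.testBit_two_pow, Nat.testBit_two_pow]
    simp [hst.symm]
  have hct : c.testBit t = !(i.testBit t) := by
    rw [hib t, Nat.testBit_two_pow, Nat.testBit_two_pow]
    simp [hst]
  have hwi := wt_eq_sum a i hilt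
  have hwc := wt_eq_sum a c hclt
  set E := ((Finset.range a).erase s).erase t with hE
  have hts : t ∈ (Finset.range a).erase s := by
    simp [Finset.mem_erase, Ne.symm hst, ht]
  have hss : s ∈ Finset.range a := by simp [hs]
  have hsplit : ∀ f : ℕ → ℕ,
      ∑ j ∈ Finset.range a, f j = f s + (f t + ∑ j ∈ E, f j) := by
    intro f
    rw [← Finset.add_sum_erase _ f hss, ← Finset.add_sum_erase _ f hts]
  have hEsum : ∑ j ∈ E, (c.testBit j).toNat = ∑ j ∈ E, (i.testBit j).toNat := by
    apply Finset.sum_congr rfl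
    intro j hj
    simp only [hE, Finset.mem_erase] at hj
    rw [hagree j hj.2.1 hj.1]
  rw [hsplit] at hwi hwc
  rw [hEsum, hcs, hct] at hwc
  cases hbs : i.testBit s <;> cases hbt : i.testBit t <;>
    rw [hbs, hbt] at hwi hwc <;>
    simp only [Bool.not_true, Bool.not_false, Bool.toNat_true, Bool.toNat_false,
      if_true, if_false] at hwi hwc <;>
    norm_num <;> omega
end

section
/- For a ≥ 2, |C_{2a−1}| = 2·|C_{2a−2}| and |R_{2a−1}| = 2·|R_{2a−2}|, where C_n = {i < 2^n : wt(i) ∈ {⌈n/2⌉−1, ⌈n/2⌉}} and R_n = {i < 2^n : wt(i) ∈ {⌈n/2⌉−2, ⌈n/2⌉−1, ⌈n/2⌉, ⌈n/2⌉+1}}. -/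
/-- `CFin n` = {i < 2^n : wt(i) ∈ {⌈n/2⌉-1, ⌈n/2⌉}} as a finset. -/
def CFin (n : ℕ) : Finset ℕ :=
  (Finset.range (2 ^ n)).filter (fun i => wt i = (n + 1) / 2 - 1 ∨ wt i = (n + 1) / 2)

/-- `RFin n` = {i < 2^n : wt(i) ∈ {⌈n/2⌉-2, ⌈n/2⌉-1, ⌈n/2⌉, ⌈n/2⌉+1}} as a finset. -/
def RFin (n : ℕ) : Finset ℕ :=
  (Finset.range (2 ^ n)).filter (fun i =>
    wt i = (n + 1) / 2 - 2 ∨ wt i = (n + 1) / 2 - 1 ∨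
    wt i = (n + 1) / 2 ∨ wt i = (n + 1) / 2 + 1)

/-!
Splitting off the last bit of `i < 2 ^ (n + 1)` is Pascal's rule: the numbers whose weight lies
in a window `[l, u]` are the `2m` with `wt m ∈ [l, u]` and the `2m + 1` with
`wt m ∈ [l - 1, u - 1]`. Complementation `m ↦ 2 ^ n - 1 - m` sends `wt m` to `n - wt m`, so when
`l + u = n + 1` the first count equals the second. For `n = 2a - 2`, both `C` and `R` are such
windows.
-/

open Finset

lemma wt_two_mul_add {b : ℕ} (hb : b < 2) (m : ℕ) : wt (2 * m + b) = wt m + b := by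
  rcases Nat.eq_zero_or_pos (b + m) with h | h
  · simp [show b = 0 by omega, show m = 0 by omega, wt]
  · rw [wt, add_comm, Nat.digits_add 2 one_lt_two b m hb (by omega), List.sum_cons, wt,
      add_comm]

lemma wt_two_mul (m : ℕ) : wt (2 * m) = wt m := wt_two_mul_add two_pos m

lemma wt_eq_wt_div_two_add_mod (i : ℕ) : wt i = wt (i / 2) + i % 2 := by
  conv_lhs => rw [← Nat.div_add_mod i 2]
  exact wt_two_mul_add (Nat.mod_lt _ two_pos) _

lemma wt_add_wt_two_pow_sub_one_sub {n i : ℕ} (hi : i < 2 ^ n) :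
    wt i + wt (2 ^ n - 1 - i) = n := by
  induction n generalizing i with
  | zero => simp_all [wt]
  | succ n ih =>
    have hc : 2 ^ (n + 1) - 1 - i = 2 * (2 ^ n - 1 - i / 2) + (1 - i % 2) := by
      rw [pow_succ]; omega
    have := ih (show i / 2 < 2 ^ n by rw [pow_succ] at hi; omega)
    rw [hc, wt_two_mul_add (by omega), wt_eq_wt_div_two_add_mod i]
    omega

lemma wt_le_of_lt_two_pow {n i : ℕ} (hi : i < 2 ^ n) : wt i ≤ n :=
  (wt_add_wt_two_pow_sub_one_sub hi).symm ▸ Nat.le_add_right _ _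

lemma card_filter_wt_comm (n : ℕ) (p : ℕ → Prop) [DecidablePred p] :
    #{i ∈ range (2 ^ n) | p (wt i)} = #{i ∈ range (2 ^ n) | p (n - wt i)} := by
  refine card_bij' (fun i _ => 2 ^ n - 1 - i) (fun i _ => 2 ^ n - 1 - i) ?_ ?_ ?_ ?_
  all_goals
    simp only [mem_filter, mem_range]
    rintro i ⟨hi, hp⟩
    have := Nat.two_pow_pos n
    have hsum := wt_add_wt_two_pow_sub_one_sub hi
  · exact ⟨by omega, by rwa [show n - wt (2 ^ n - 1 - i) = wt i by omega]⟩
  · exact ⟨by omega, by rwa [show wt (2 ^ n - 1 - i) = n - wt i by omega]⟩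
  · omega
  · omega

lemma card_filter_range_two_mul (p : ℕ → Prop) [DecidablePred p] (N : ℕ) :
    #{i ∈ range (2 * N) | p i} =
      #{m ∈ range N | p (2 * m)} + #{m ∈ range N | p (2 * m + 1)} := by
  induction N with
  | zero => simp
  | succ N ih =>
    simp only [card_filter] at *
    rw [show 2 * (N + 1) = 2 * N + 1 + 1 by ring, sum_range_succ, sum_range_succ, sum_range_succ,
      sum_range_succ, ih]
    ring

lemma card_filter_wt_mem_Icc_succ {n l u : ℕ} (h : l + u = n + 1) (hu : 0 < u) :
    #{i ∈ range (2 ^ (n + 1)) | wt i ∈ Icc l u} =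
      2 * #{i ∈ range (2 ^ n) | wt i ∈ Icc (l - 1) (u - 1)} := by
  rw [pow_succ', card_filter_range_two_mul]
  simp only [wt_two_mul, wt_two_mul_add one_lt_two]
  rw [card_filter_wt_comm n (· ∈ Icc l u)]
  refine (congrArg₂ (· + ·) ?_ ?_).trans (two_mul _).symm <;>
    refine congrArg card (filter_congr fun i hi => ?_)
  · have := wt_le_of_lt_two_pow (mem_range.1 hi)
    simp only [mem_Icc]
    omega
  · simp only [mem_Icc]
    omega

lemma CFin_eq_filter_wt_mem_Icc (n : ℕ) :
    CFin n = {i ∈ range (2 ^ n) | wt i ∈ Icc ((n + 1) / 2 - 1) ((n + 1) / 2)} :=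
  filter_congr fun i _ => by rw [mem_Icc]; omega

lemma RFin_eq_filter_wt_mem_Icc (n : ℕ) :
    RFin n = {i ∈ range (2 ^ n) | wt i ∈ Icc ((n + 1) / 2 - 2) ((n + 1) / 2 + 1)} :=
  filter_congr fun i _ => by rw [mem_Icc]; omega

theorem stmt5 (a : ℕ) (ha : 2 ≤ a) :
    (CFin (2 * a - 1)).card = 2 * (CFin (2 * a - 2)).card ∧
    (RFin (2 * a - 1)).card = 2 * (RFin (2 * a - 2)).card := by
  obtain ⟨c, rfl⟩ : ∃ c, a = c + 1 := ⟨a - 1, by omega⟩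
  rw [show 2 * (c + 1) - 1 = 2 * c + 1 by omega, show 2 * (c + 1) - 2 = 2 * c by omega]
  simp only [CFin_eq_filter_wt_mem_Icc, RFin_eq_filter_wt_mem_Icc]
  constructor
  · convert card_filter_wt_mem_Icc_succ (n := 2 * c) _ _ using 5 <;>
      first | omega | (congr 1 <;> omega)
  · convert card_filter_wt_mem_Icc_succ (n := 2 * c) _ _ using 5 <;>
      first | omega | (congr 1 <;> omega)
end

section
/- Let a ≥ 1 and let k, l ∈ {1,…,a} with k ≠ l. For any i < 2^a such that (i ⊕ 2^{k−1}) ∈ C_a and (i ⊕ 2^{k−1}) ∈ (2^{k−1} ⊕ 2^{l−1} ⊕ C_a), the quantity wt(i AND (2^{k−1} ⊕ 2^{l−1})) is even, where C_a = {j < 2^a : wt(j) ∈ {⌈a/2⌉−1, ⌈a/2⌉}}. -/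
lemma wt_step (n : ℕ) : wt n = n % 2 + wt (n / 2) := by
  rcases Nat.eq_zero_or_pos n with h | h
  · simp [h, wt]
  · rw [wt, Nat.digits_def' (by norm_num : 1 < 2) h]
    simp [wt]

lemma wt_xor_pow : ∀ (j x : ℕ), Nat.testBit x j = false → wt (x ^^^ 2 ^ j) = wt x + 1 := by
  intro j
  induction j with
  | zero =>
    intro x hx
    simp only [Nat.testBit_zero, decide_eq_false_iff_not] at hx
    have hx2 : x % 2 = 0 := by omega
    rw [wt_step (x ^^^ 2 ^ 0), wt_step x]
    have h1 : (x ^^^ 2 ^ 0) % 2 = 1 := by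
      rw [Nat.xor_mod_two_eq]; omega
    have h2 : (x ^^^ 2 ^ 0) / 2 = x / 2 := by
      rw [Nat.xor_div_two]; norm_num
    rw [h1, h2]; omega
  | succ j ih =>
    intro x hx
    rw [wt_step (x ^^^ 2 ^ (j + 1)), wt_step x]
    have h1 : (x ^^^ 2 ^ (j + 1)) % 2 = x % 2 := by
      rw [Nat.xor_mod_two_eq, pow_succ]; omega
    have h2 : (x ^^^ 2 ^ (j + 1)) / 2 = x / 2 ^^^ 2 ^ j := by
      rw [Nat.xor_div_two, pow_succ, Nat.mul_div_cancel _ (by norm_num : 0 < 2)]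
    rw [h1, h2, ih (x / 2) (by rw [Nat.testBit_div_two]; exact hx)]
    omega

lemma wt_xor_pow_true (j x : ℕ) (h : Nat.testBit x j = true) :
    wt x = wt (x ^^^ 2 ^ j) + 1 := by
  have hb : Nat.testBit (x ^^^ 2 ^ j) j = false := by
    simp [Nat.testBit_xor, Nat.testBit_two_pow, h]
  have := wt_xor_pow j (x ^^^ 2 ^ j) hb
  rwa [Nat.xor_assoc, Nat.xor_self, Nat.xor_zero] at this

theorem stmt9 (a : ℕ) (ha : 1 ≤ a) (k l : ℕ) (hk1 : 1 ≤ k) (hka : k ≤ a)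
    (hl1 : 1 ≤ l) (hla : l ≤ a) (hkl : k ≠ l) (i : ℕ) (hi : i < 2 ^ a)
    (h1 : (i ^^^ 2 ^ (k - 1)) ∈ Cset a)
    (h2 : (i ^^^ 2 ^ (k - 1)) ∈ (fun c => (2 ^ (k - 1) ^^^ 2 ^ (l - 1)) ^^^ c) '' Cset a) :
    Even (wt (i &&& (2 ^ (k - 1) ^^^ 2 ^ (l - 1)))) := by
  set p := k - 1 with hp
  set q := l - 1 with hq
  have hpq : p ≠ q := by omega
  -- extract the second membership
  obtain ⟨c, hc, hce⟩ := h2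
  have key : ∀ x y z : ℕ, (y ^^^ z) ^^^ (x ^^^ y) = x ^^^ z := by
    intro x y z
    apply Nat.eq_of_testBit_eq
    intro n
    simp only [Nat.testBit_xor]
    cases x.testBit n <;> cases y.testBit n <;> cases z.testBit n <;> rfl
  have hcval : c = i ^^^ 2 ^ q := by
    have : (2 ^ p ^^^ 2 ^ q) ^^^ ((2 ^ p ^^^ 2 ^ q) ^^^ c) = (2 ^ p ^^^ 2 ^ q) ^^^ (i ^^^ 2 ^ p) := by
      simp only at hce
      rw [hce]
    rw [← Nat.xor_assoc, Nat.xor_self, Nat.zero_xor] at this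
    rw [this, key]
  rw [hcval] at hc
  set t := (a + 1) / 2 with ht
  have ht1 : 1 ≤ t := by omega
  obtain ⟨-, hw1⟩ := h1
  obtain ⟨-, hw2⟩ := hc
  by_cases hbp : i.testBit p
  · by_cases hbq : i.testBit q
    · -- both bits set : i &&& m = m, wt m = 2
      have hm : i &&& (2 ^ p ^^^ 2 ^ q) = 2 ^ p ^^^ 2 ^ q := by
        apply Nat.eq_of_testBit_eq
        intro n
        simp only [Nat.testBit_and, Nat.testBit_xor, Nat.testBit_two_pow]
        by_cases hnp : p = n
        · subst hnp; simp [hbp, Ne.symm hpq]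
        · by_cases hnq : q = n
          · subst hnq; simp [hbq, hpq]
          · simp [hnp, hnq]
      have hwm : wt (2 ^ p ^^^ 2 ^ q) = 2 := by
        have h0 : Nat.testBit (2 ^ p) q = false := by
          simp [Nat.testBit_two_pow, hpq]
        rw [wt_xor_pow q (2 ^ p) h0]
        have : wt (2 ^ p) = 1 := by
          have := wt_xor_pow p 0 (Nat.zero_testBit p)
          simpa [wt] using this
        omega
      rw [hm, hwm]
      exact ⟨1, rfl⟩
    · -- bits differ : contradiction
      exfalso
      have e1 := wt_xor_pow_true p i hbp
      have e2 := wt_xor_pow q i (by simpa using hbq)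
      omega
  · by_cases hbq : i.testBit q
    · exfalso
      have e1 := wt_xor_pow p i (by simpa using hbp)
      have e2 := wt_xor_pow_true q i hbq
      omega
    · -- both bits clear : i &&& m = 0
      have hm : i &&& (2 ^ p ^^^ 2 ^ q) = 0 := by
        apply Nat.eq_of_testBit_eq
        intro n
        simp only [Nat.testBit_and, Nat.testBit_xor, Nat.testBit_two_pow, Nat.zero_testBit]
        by_cases hnp : p = n
        · subst hnp; simp [Bool.eq_false_iff.mpr hbp]
        · by_cases hnq : q = n
          · subst hnq; simp [Bool.eq_false_iff.mpr hbq]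
          · simp [hnp, hnq]
      rw [hm]
      simp [wt]
end

section
/- Let a ≥ 1, let G_a be the 2^a × 2^a matrix over the polynomial entries in complex variables x_0,…,x_a defined recursively by G_1 = [[x_0, −x_1*],[x_1, x_0*]] and G_a = [[G_{a−1}, −x_a* I],[x_a I, G_{a−1}^H]] (I the identity of size 2^{a−1}, H conjugate transpose). Then for all row and column indices i, j < 2^a, the entry G_a(i,j) is nonzero if and only if i ⊕ j ∈ {0, 1, 2, 4, …, 2^{a−1}} (bitwise XOR), and when nonzero, the variable appearing in G_a(i,j) is x_l where i ⊕ j = 2^{l−1} (with the convention that i ⊕ j = 0 corresponds to x_0). -/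
/-- The recursively-defined square complex orthogonal design of Tirkkonen–Hottinen,
evaluated at an assignment `x : ℕ → ℂ` of values to the complex variables.
`G x a i j` is the `(i,j)` entry of the `2^a × 2^a` design `G_a` (indices `i j < 2^a`):
`G_0 = [x 0]` and
`G_{a+1} = [[G_a, -x_{a+1}* I], [x_{a+1} I, G_a^H]]`. -/
def G (x : ℕ → ℂ) : ℕ → ℕ → ℕ → ℂ
  | 0, _, _ => x 0
  | a + 1, i, j =>
    if i < 2 ^ a then
      if j < 2 ^ a then G x a i j
      else if j = i + 2 ^ a then -(starRingEnd ℂ (x (a + 1))) else 0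
    else
      if j < 2 ^ a then (if i = j + 2 ^ a then x (a + 1) else 0)
      else starRingEnd ℂ (G x a (j - 2 ^ a) (i - 2 ^ a))

/-! Write an index below `2 ^ (a + 1)` as `2 ^ a * p + r` with top bit `p` and `r < 2 ^ a`; XOR then
acts blockwise, `(2 ^ a * p + r) ⊕ (2 ^ a * q + s) = 2 ^ a * (p ⊕ q) + (r ⊕ s)`. The diagonal blocks
of `G_{a+1}` are `G_a` and `G_a^H`, covered by induction since XOR is symmetric, while each
off-diagonal block is `x_{a+1}` or `-x_{a+1}*` times the identity, supported exactly where
`i ⊕ j = 2 ^ a`. -/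

lemma Nat.two_pow_mul_add_xor {a p q r s : ℕ} (hr : r < 2 ^ a) (hs : s < 2 ^ a) :
    (2 ^ a * p + r) ^^^ (2 ^ a * q + s) = 2 ^ a * (p ^^^ q) + (r ^^^ s) := by
  apply Nat.eq_of_testBit_eq
  intro k
  simp only [Nat.testBit_xor, Nat.testBit_two_pow_mul_add _ hr, Nat.testBit_two_pow_mul_add _ hs,
    Nat.testBit_two_pow_mul_add _ (Nat.xor_lt_two_pow hr hs)]
  split_ifs <;> rfl

lemma Nat.two_pow_add_xor {a r s : ℕ} (hr : r < 2 ^ a) (hs : s < 2 ^ a) :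
    (2 ^ a + r) ^^^ s = 2 ^ a + (r ^^^ s) := by
  simpa using Nat.two_pow_mul_add_xor (p := 1) (q := 0) hr hs

lemma Nat.two_pow_add_xor_two_pow_add {a r s : ℕ} (hr : r < 2 ^ a) (hs : s < 2 ^ a) :
    (2 ^ a + r) ^^^ (2 ^ a + s) = r ^^^ s := by
  simpa using Nat.two_pow_mul_add_xor (p := 1) (q := 1) hr hs

lemma Nat.lt_two_pow_or_exists_eq_two_pow_add {a i : ℕ} (hi : i < 2 ^ (a + 1)) :
    i < 2 ^ a ∨ ∃ r < 2 ^ a, i = 2 ^ a + r := by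
  rw [pow_succ] at hi
  by_cases h : i < 2 ^ a
  · exact .inl h
  · exact .inr ⟨i - 2 ^ a, by omega, by omega⟩

lemma exists_ite_ne_zero_iff {α M : Type*} [Zero M] (p : Prop) [Decidable p] {f : α → M}
    (hf : ∃ x, f x ≠ 0) : (∃ x, (if p then f x else 0) ≠ 0) ↔ p := by
  by_cases hp : p <;> simp [hp, hf]

def IsZeroOrTwoPowLt (a n : ℕ) : Prop :=
  n = 0 ∨ ∃ l < a, n = 2 ^ l

lemma isZeroOrTwoPowLt_succ_iff_of_lt {a n : ℕ} (hn : n < 2 ^ a) :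
    IsZeroOrTwoPowLt (a + 1) n ↔ IsZeroOrTwoPowLt a n := by
  refine or_congr_right ⟨fun ⟨l, _, hl⟩ => ⟨l, ?_, hl⟩, fun ⟨l, hla, hl⟩ => ⟨l, by omega, hl⟩⟩
  rwa [hl, Nat.pow_lt_pow_iff_right one_lt_two] at hn

lemma isZeroOrTwoPowLt_succ_two_pow_add_iff {a r : ℕ} (hr : r < 2 ^ a) :
    IsZeroOrTwoPowLt (a + 1) (2 ^ a + r) ↔ r = 0 := by
  refine ⟨?_, fun h => .inr ⟨a, a.lt_succ_self, by rw [h, add_zero]⟩⟩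
  rintro (h | ⟨l, hl, h⟩)
  · omega
  · have : 2 ^ l ≤ 2 ^ a := Nat.pow_le_pow_right two_pos (Nat.lt_succ_iff.mp hl)
    omega

section Blocks

variable (x : ℕ → ℂ) {a i j r s : ℕ}

lemma G_succ_of_lt_of_lt (hi : i < 2 ^ a) (hj : j < 2 ^ a) : G x (a + 1) i j = G x a i j := by
  simp [G, hi, hj]

lemma G_succ_two_pow_add_right (hi : i < 2 ^ a) :
    G x (a + 1) i (2 ^ a + s) = if s = i then -starRingEnd ℂ (x (a + 1)) else 0 := by
  simp [G, hi, add_comm]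

lemma G_succ_two_pow_add_left (hj : j < 2 ^ a) :
    G x (a + 1) (2 ^ a + r) j = if r = j then x (a + 1) else 0 := by
  simp [G, hj, add_comm]

lemma G_succ_two_pow_add_two_pow_add :
    G x (a + 1) (2 ^ a + r) (2 ^ a + s) = starRingEnd ℂ (G x a s r) := by
  simp [G]

end Blocks

theorem stmt18_general (a : ℕ) (i j : ℕ) (hi : i < 2 ^ a) (hj : j < 2 ^ a) :
    (∃ x : ℕ → ℂ, G x a i j ≠ 0) ↔ (i ^^^ j = 0 ∨ ∃ l < a, i ^^^ j = 2 ^ l) := by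
  change _ ↔ IsZeroOrTwoPowLt a (i ^^^ j)
  induction a generalizing i j with
  | zero =>
    obtain rfl : i = 0 := by simpa using hi
    obtain rfl : j = 0 := by simpa using hj
    simpa [G, IsZeroOrTwoPowLt] using ⟨fun _ => 1, one_ne_zero⟩
  | succ a ih =>
    have ex_ne_zero : ∃ x : ℕ → ℂ, x (a + 1) ≠ 0 := ⟨fun _ => 1, one_ne_zero⟩
    rcases Nat.lt_two_pow_or_exists_eq_two_pow_add hi with hi | ⟨r, hr, rfl⟩ <;>
      rcases Nat.lt_two_pow_or_exists_eq_two_pow_add hj with hj | ⟨s, hs, rfl⟩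
    · rw [isZeroOrTwoPowLt_succ_iff_of_lt (Nat.xor_lt_two_pow hi hj), ← ih i j hi hj]
      simp only [G_succ_of_lt_of_lt _ hi hj]
    · rw [Nat.xor_comm, Nat.two_pow_add_xor hs hi,
        isZeroOrTwoPowLt_succ_two_pow_add_iff (Nat.xor_lt_two_pow hs hi), xor_eq_zero_iff]
      simp only [G_succ_two_pow_add_right _ hi]
      exact exists_ite_ne_zero_iff _ (by simpa using ex_ne_zero)
    · rw [Nat.two_pow_add_xor hr hj,
        isZeroOrTwoPowLt_succ_two_pow_add_iff (Nat.xor_lt_two_pow hr hj), xor_eq_zero_iff]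
      simp only [G_succ_two_pow_add_left _ hj]
      exact exists_ite_ne_zero_iff _ ex_ne_zero
    · rw [Nat.two_pow_add_xor_two_pow_add hr hs, Nat.xor_comm,
        isZeroOrTwoPowLt_succ_iff_of_lt (Nat.xor_lt_two_pow hs hr), ← ih s r hs hr]
      simp only [G_succ_two_pow_add_two_pow_add, ne_eq, map_eq_zero]

/-- Support characterization: the formal entry `G_a(i,j)` is nonzero (i.e. nonzero for
some assignment of complex values to the variables) iff `i ⊕ j ∈ {0} ∪ {2^l : l < a}`. -/
theorem stmt18 (a : ℕ) (ha : 1 ≤ a) (i j : ℕ) (hi : i < 2 ^ a) (hj : j < 2 ^ a) :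
    (∃ x : ℕ → ℂ, G x a i j ≠ 0) ↔ (i ^^^ j = 0 ∨ ∃ l < a, i ^^^ j = 2 ^ l) :=
  stmt18_general a i j hi hj
end

section
/- Let a ≥ 1 and let G_a be the square complex orthogonal design defined by G_1 = [[x_0, −x_1*],[x_1, x_0*]] and G_a = [[G_{a−1}, −x_a* I_{2^{a−1}}],[x_a I_{2^{a−1}}, G_{a−1}^H]], with complex variables x_0,…,x_a. Then for every assignment of complex values to x_0,…,x_a, the matrix satisfies G_a^H G_a = (|x_0|² + |x_1|² + ⋯ + |x_a|²) I_{2^a}. -/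
/-! `G_{a+1}` is a block matrix `[[A, -c̄ I], [c I, Aᴴ]]` with `A = G_a`. Multiplying out the blocks,
its Gram matrix is `(s + |c|²) I` as soon as both `Aᴴ A` and `A Aᴴ` equal `s I`: the diagonal blocks
use one identity each and the off-diagonal blocks cancel because scalars commute with `A`. So the
induction carries both identities along. -/

open Matrix

/-- The `2^a × 2^a` matrix `G_a` evaluated at `x`. -/
def Gmat (x : ℕ → ℂ) (a : ℕ) : Matrix (Fin (2 ^ a)) (Fin (2 ^ a)) ℂ :=
  fun i j => G x a i j

namespace Matrix

variable {m n R : Type*} [Fintype m] [DecidableEq m] [Fintype n] [DecidableEq n]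

def IsScaledUnitary [Semiring R] [Star R] (M : Matrix n n R) (s : R) : Prop :=
  Mᴴ * M = s • 1 ∧ M * Mᴴ = s • 1

theorem IsScaledUnitary.reindex [Semiring R] [Star R] {M : Matrix m m R} {s : R}
    (hM : M.IsScaledUnitary s) (e : m ≃ n) : (reindex e e M).IsScaledUnitary s := by
  simp only [IsScaledUnitary, reindex_apply, conjTranspose_submatrix, submatrix_mul_equiv,
    hM.1, hM.2, submatrix_smul, Pi.smul_apply, submatrix_one_equiv, and_self]

theorem IsScaledUnitary.fromBlocks [CommRing R] [StarRing R] {A : Matrix n n R} {s : R}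
    (hA : A.IsScaledUnitary s) (c : R) :
    (Matrix.fromBlocks A (-star c • 1) (c • 1) Aᴴ).IsScaledUnitary (s + star c * c) := by
  have hscalar : (s + star c * c) • (1 : Matrix (n ⊕ n) (n ⊕ n) R) =
      Matrix.fromBlocks ((s + star c * c) • 1) 0 0 ((s + star c * c) • 1) := by
    rw [← fromBlocks_one, fromBlocks_smul, smul_zero]
  simp only [IsScaledUnitary, hscalar, fromBlocks_conjTranspose, fromBlocks_multiply,
    conjTranspose_smul, conjTranspose_one, conjTranspose_conjTranspose, star_neg, star_star,
    Matrix.smul_mul, Matrix.mul_smul, Matrix.one_mul, Matrix.mul_one, hA.1, hA.2, neg_mul,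
    mul_neg, smul_smul, mul_comm c, fromBlocks_inj]
  refine ⟨⟨?_, ?_, ?_, ?_⟩, ?_, ?_, ?_, ?_⟩ <;> module

end Matrix

theorem Gmat_succ (x : ℕ → ℂ) (a : ℕ) :
    Gmat x (a + 1) = reindex (finSumFinEquiv.trans (finCongr (Nat.two_pow_succ a).symm))
      (finSumFinEquiv.trans (finCongr (Nat.two_pow_succ a).symm))
      (fromBlocks (Gmat x a) (-star (x (a + 1)) • 1) (x (a + 1) • 1) (Gmat x a)ᴴ) := by
  set e := finSumFinEquiv.trans (finCongr (Nat.two_pow_succ a).symm)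
  ext i j
  obtain ⟨i, rfl⟩ := e.surjective i
  obtain ⟨j, rfl⟩ := e.surjective j
  rw [reindex_apply, submatrix_apply, Equiv.symm_apply_apply, Equiv.symm_apply_apply]
  rcases i with i | i <;> rcases j with j | j
  · simp [e, Gmat, G]
  · simp [e, Gmat, G, one_apply, Fin.ext_iff, eq_comm (a := (j : ℕ))]
    split_ifs <;> simp
  · simp [e, Gmat, G, one_apply, Fin.ext_iff]
  · simp [e, Gmat, G]

theorem isScaledUnitary_Gmat (x : ℕ → ℂ) (a : ℕ) :
    (Gmat x a).IsScaledUnitary ((∑ l ∈ Finset.range (a + 1), ‖x l‖ ^ 2 : ℝ) : ℂ) := by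
  induction a with
  | zero =>
    constructor <;> ext i j <;> fin_cases i <;> fin_cases j <;>
      simp [Gmat, G, mul_apply, Complex.conj_mul', Complex.mul_conj']
  | succ a ih =>
    rw [Finset.sum_range_succ, Complex.ofReal_add, Complex.ofReal_pow, ← Complex.conj_mul',
      Gmat_succ]
    exact (ih.fromBlocks _).reindex _

theorem stmt19_general (a : ℕ) (x : ℕ → ℂ) :
    (Gmat x a)ᴴ * Gmat x a =
      (((∑ l ∈ Finset.range (a + 1), ‖x l‖ ^ 2 : ℝ) : ℂ)) •
        (1 : Matrix (Fin (2 ^ a)) (Fin (2 ^ a)) ℂ) :=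
  (isScaledUnitary_Gmat x a).1

/-- `G_a^H G_a = (|x_0|² + ⋯ + |x_a|²) I`. -/
theorem stmt19 (a : ℕ) (ha : 1 ≤ a) (x : ℕ → ℂ) :
    (Gmat x a)ᴴ * Gmat x a =
      (((∑ l ∈ Finset.range (a + 1), ‖x l‖ ^ 2 : ℝ) : ℂ)) •
        (1 : Matrix (Fin (2 ^ a)) (Fin (2 ^ a)) ℂ) :=
  stmt19_general a x
end
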